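/- Let V be a finite-dimensional vector space with nondegenerate alternating form b and adjoint involution σ on A = End(V). Define the sandwich isomorphism Sand : A⊗A → End(A) by Sand(a⊗b′)(x) = a x b′, and let σ₂ : A⊗A → A⊗A be the map characterized by Sand(σ₂(u))(x) = Sand(u)(σ(x)). Then σ₂(φ_b(x₁⊗x₂) ⊗ φ_b(x₃⊗x₄)) = −φ_b(x₁⊗x₃) ⊗ φ_b(x₂⊗x₄) for all x₁, x₂, x₃, x₄ ∈ V. -/
import Mathlib


open TensorProduct

/-- `φ_b(x⊗y)(w) = x·b(y,w)`. -/
def phiOf {F V : Type*} [Field F] [AddCommGroup V] [Module F V]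
    (b : V →ₗ[F] V →ₗ[F] F) (x y : V) : V →ₗ[F] V :=
  (b y).smulRight x

/-- Let `V` be finite-dimensional with nondegenerate alternating form
`b`, `σ` the adjoint involution of `b` on `A = End(V)`, `Sand : A⊗A ≅ End(A)` the
sandwich isomorphism `Sand(a⊗b′)(x) = a x b′`, and `σ₂ : A⊗A → A⊗A` the map with
`Sand(σ₂(u))(x) = Sand(u)(σ(x))`.  Then
`σ₂(φ_b(x₁⊗x₂) ⊗ φ_b(x₃⊗x₄)) = −φ_b(x₁⊗x₃) ⊗ φ_b(x₂⊗x₄)`. -/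
theorem sigma_two_formula {F V : Type*} [Field F] [AddCommGroup V] [Module F V]
    [FiniteDimensional F V]
    (b : V →ₗ[F] V →ₗ[F] F)
    (halt : ∀ v : V, b v v = 0)
    (hnd : ∀ x : V, (∀ y : V, b x y = 0) → x = 0)
    (σ : (V →ₗ[F] V) → (V →ₗ[F] V))
    (hσ : ∀ (f : V →ₗ[F] V) (v w : V), b (f v) w = b v (σ f w))
    (Sand : ((V →ₗ[F] V) ⊗[F] (V →ₗ[F] V)) →ₗ[F] ((V →ₗ[F] V) →ₗ[F] (V →ₗ[F] V)))
    (hSand : ∀ (a c x : V →ₗ[F] V), Sand (a ⊗ₜ[F] c) x = a ∘ₗ x ∘ₗ c)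
    (hSandbij : Function.Bijective Sand)
    (σ₂ : ((V →ₗ[F] V) ⊗[F] (V →ₗ[F] V)) →ₗ[F] ((V →ₗ[F] V) ⊗[F] (V →ₗ[F] V)))
    (hσ₂ : ∀ (u : (V →ₗ[F] V) ⊗[F] (V →ₗ[F] V)) (x : V →ₗ[F] V),
      Sand (σ₂ u) x = Sand u (σ x)) :
    ∀ x₁ x₂ x₃ x₄ : V,
      σ₂ (phiOf b x₁ x₂ ⊗ₜ[F] phiOf b x₃ x₄)
        = - (phiOf b x₁ x₃ ⊗ₜ[F] phiOf b x₂ x₄) := by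
  have hskew : ∀ u v : V, b u v = - b v u := by
    intro u v
    have h := halt (u + v)
    simp only [map_add, LinearMap.add_apply, halt u, halt v, zero_add, add_zero] at h
    exact eq_neg_of_add_eq_zero_right h
  intro x₁ x₂ x₃ x₄
  apply hSandbij.injective
  ext x w
  rw [hσ₂, map_neg]
  simp only [hSand, LinearMap.neg_apply, LinearMap.comp_apply, phiOf,
    LinearMap.smulRight_apply, map_smul, smul_eq_mul]
  rw [← hσ, hskew (x x₂) x₃]
  module
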